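/- If μ is a stable matching of the many-to-one market, then λ = T^{-1}(μ), which assigns to each worker w ∈ μ(φ_i) the firm-copy f_{ij} with the smallest index j such that w = max_{μ(φ_i)} P_{ij}, is a well-defined one-to-one matching. -/
import Mathlib


open Classical

noncomputable section

/- Many-to-one market: firms `ι` with path-independent choice functions
`C i : Finset W → Finset W`, workers `W` with linear preferences `PwFirm w`
over `Option ι` (`none` = `∅`, larger = better).  Via the Aizerman–Malishevski
decomposition `C i S = ⋃_{j} max_S P_{ij}`, firm `i` is split into copies
indexed by `Fin (J i)`; firm-copy `⟨i, j⟩` has the linear preference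
`Pf ⟨i, j⟩` over `Option W`, and workers have linear preferences `Pw w` over
`Option (Σ i, Fin (J i))` refining `PwFirm w`. -/

section Defs

variable {ι W : Type*} [Fintype ι] [DecidableEq ι] [Fintype W] [DecidableEq W]
  {J : ι → ℕ}

/-- `lamF`, `lamW` form a one-to-one matching. -/
def OneIsMatching (lamF : (Σ i : ι, Fin (J i)) → Option W)
    (lamW : W → Option (Σ i : ι, Fin (J i))) : Prop :=
  ∀ (f : Σ i : ι, Fin (J i)) (w : W), lamF f = some w ↔ lamW w = some f

/-- Stability* of a one-to-one matching: no worker prefers `∅` to her match, no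
firm-copy prefers `∅` to its match, no matched firm-copy envies another copy of
the same firm, and there is no blocking* pair `(f, w)` (i.e. `w` prefers `f` to
her match and `f` prefers `w` to the match of every copy of the same firm). -/
def StableStar (Pf : (Σ i : ι, Fin (J i)) → LinearOrder (Option W))
    (Pw : W → LinearOrder (Option (Σ i : ι, Fin (J i))))
    (lamF : (Σ i : ι, Fin (J i)) → Option W)
    (lamW : W → Option (Σ i : ι, Fin (J i))) : Prop :=
  (∀ w : W, ¬ (Pw w).lt (lamW w) none) ∧
  (∀ f : Σ i : ι, Fin (J i),
    ¬ ((Pf f).lt (lamF f) none ∨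
      (lamF f ≠ none ∧ ∃ j' : Fin (J f.1), (Pf f).lt (lamF f) (lamF ⟨f.1, j'⟩)))) ∧
  (∀ (f : Σ i : ι, Fin (J i)) (w : W),
    ¬ ((Pw w).lt (lamW w) (some f) ∧
      ∀ j' : Fin (J f.1), (Pf f).lt (lamF ⟨f.1, j'⟩) (some w)))

/-- `muW`, `muF` form a many-to-one matching. -/
def ManyIsMatching (muW : W → Option ι) (muF : ι → Finset W) : Prop :=
  ∀ (i : ι) (w : W), w ∈ muF i ↔ muW w = some i

/-- Stability of a many-to-one matching: individual rationality for workers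
and firms, and no blocking worker–firm pair. -/
def ManyStable (C : ι → Finset W → Finset W)
    (PwFirm : W → LinearOrder (Option ι))
    (muW : W → Option ι) (muF : ι → Finset W) : Prop :=
  (∀ w : W, (PwFirm w).le none (muW w)) ∧
  (∀ i : ι, C i (muF i) = muF i) ∧
  (∀ (w : W) (i : ι),
    ¬ (w ∉ muF i ∧ w ∈ C i (insert w (muF i)) ∧ (PwFirm w).lt (muW w) (some i)))

/-- The choice functions `C` are decomposed à la Aizerman–Malishevski by the
linear orders `Pf ⟨i, j⟩`: `C i S = ⋃_{j ∈ J_i} max_S P_{ij}`. -/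
def AMDecomposition (C : ι → Finset W → Finset W)
    (Pf : (Σ i : ι, Fin (J i)) → LinearOrder (Option W)) : Prop :=
  ∀ (i : ι) (S : Finset W) (w : W),
    w ∈ C i S ↔ w ∈ S ∧ ∃ j : Fin (J i), ∀ x ∈ S, (Pf ⟨i, j⟩).le (some x) (some w)

/-- `T(λ)`, firm side: `μ(φ_i) = ⋃_{j ∈ J_i} {λ(f_{ij})}`. -/
def Tfirm (lamF : (Σ i : ι, Fin (J i)) → Option W) (i : ι) : Finset W :=
  Finset.univ.filter fun w : W => ∃ j : Fin (J i), lamF ⟨i, j⟩ = some w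

/-- `T(λ)`, worker side: `μ(w)` is the firm owning the copy `λ(w)`. -/
def Tworker (lamW : W → Option (Σ i : ι, Fin (J i))) (w : W) : Option ι :=
  (lamW w).map Sigma.fst

/-- `T⁻¹(μ)`, worker side: a worker `w ∈ μ(φ_i)` is matched to the copy
`f_{ij}` of `φ_i` with the smallest index `j` such that
`w = max_{μ(φ_i)} P_{ij}`. -/
def TinvW (Pf : (Σ i : ι, Fin (J i)) → LinearOrder (Option W))
    (muW : W → Option ι) (muF : ι → Finset W) (w : W) :
    Option (Σ i : ι, Fin (J i)) :=
  match muW w with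
  | none => none
  | some i =>
      if h : (Finset.univ.filter (fun j : Fin (J i) =>
          ∀ x ∈ muF i, (Pf ⟨i, j⟩).le (some x) (some w))).Nonempty then
        some ⟨i, (Finset.univ.filter (fun j : Fin (J i) =>
          ∀ x ∈ muF i, (Pf ⟨i, j⟩).le (some x) (some w))).min' h⟩
      else none

/-- `T⁻¹(μ)`, firm-copy side. -/
def TinvF (Pf : (Σ i : ι, Fin (J i)) → LinearOrder (Option W))
    (muW : W → Option ι) (muF : ι → Finset W) (f : Σ i : ι, Fin (J i)) :
    Option W :=
  if h : ∃ w : W, TinvW Pf muW muF w = some f then some h.choose else none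

end Defs

lemma tinvW_eq {ι W : Type*} [Fintype ι] [DecidableEq ι] [Fintype W] [DecidableEq W]
    {J : ι → ℕ}
    (Pf : (Σ i : ι, Fin (J i)) → LinearOrder (Option W))
    (muW : W → Option ι) (muF : ι → Finset W) (w : W) (i : ι)
    (hmu : muW w = some i) :
    TinvW Pf muW muF w =
      if h : (Finset.univ.filter (fun j : Fin (J i) =>
          ∀ x ∈ muF i, (Pf ⟨i, j⟩).le (some x) (some w))).Nonempty then
        some ⟨i, (Finset.univ.filter (fun j : Fin (J i) =>
          ∀ x ∈ muF i, (Pf ⟨i, j⟩).le (some x) (some w))).min' h⟩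
      else none := by
  unfold TinvW; rw [hmu]

lemma tinvW_spec {ι W : Type*} [Fintype ι] [DecidableEq ι] [Fintype W] [DecidableEq W]
    {J : ι → ℕ}
    (Pf : (Σ i : ι, Fin (J i)) → LinearOrder (Option W))
    (muW : W → Option ι) (muF : ι → Finset W) (w : W) (f : Σ i : ι, Fin (J i))
    (h : TinvW Pf muW muF w = some f) :
    muW w = some f.1 ∧ ∀ x ∈ muF f.1, (Pf f).le (some x) (some w) := by
  rcases hmu : muW w with _ | i
  · unfold TinvW at h; rw [hmu] at h; simp at h
  · rw [tinvW_eq Pf muW muF w i hmu] at h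
    split at h
    · rename_i hne
      have hf : f = (⟨i, (Finset.univ.filter (fun j : Fin (J i) =>
          ∀ x ∈ muF i, (Pf ⟨i, j⟩).le (some x) (some w))).min' hne⟩ : Σ i, Fin (J i)) :=
        (Option.some_injective _ h).symm
      subst hf
      exact ⟨rfl, by simpa using Finset.min'_mem _ hne⟩
    · simp at h

/-- if `μ` is a stable matching of the many-to-one market, then
`λ = T⁻¹(μ)` — assigning to each worker `w ∈ μ(φ_i)` the copy `f_{ij}` with the
smallest index `j` such that `w = max_{μ(φ_i)} P_{ij}` — is a well-defined
one-to-one matching: every matched worker does get a copy of her firm, and the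
assignment is a one-to-one matching. -/
theorem Tinv_well_defined
    {ι W : Type*} [Fintype ι] [DecidableEq ι] [Fintype W] [DecidableEq W]
    {J : ι → ℕ}
    (C : ι → Finset W → Finset W)
    (Pf : (Σ i : ι, Fin (J i)) → LinearOrder (Option W))
    (PwFirm : W → LinearOrder (Option ι))
    (hAM : AMDecomposition C Pf)
    (muW : W → Option ι) (muF : ι → Finset W)
    (hmatch : ManyIsMatching muW muF)
    (hstable : ManyStable C PwFirm muW muF) :
    -- every worker matched by μ is assigned a copy of her firm, at which she
    -- is the maximum of μ(φ_i)
    (∀ (w : W) (i : ι), muW w = some i →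
      ∃ j : Fin (J i), TinvW Pf muW muF w = some ⟨i, j⟩ ∧
        ∀ x ∈ muF i, (Pf ⟨i, j⟩).le (some x) (some w)) ∧
    -- λ is a one-to-one matching (in particular no two workers share a copy)
    OneIsMatching (TinvF Pf muW muF) (TinvW Pf muW muF) := by
  have hpart1 : ∀ (w : W) (i : ι), muW w = some i →
      ∃ j : Fin (J i), TinvW Pf muW muF w = some ⟨i, j⟩ ∧
        ∀ x ∈ muF i, (Pf ⟨i, j⟩).le (some x) (some w) := by
    intro w i hmu
    have hwmem : w ∈ muF i := (hmatch i w).2 hmu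
    have hC : w ∈ C i (muF i) := by rw [hstable.2.1 i]; exact hwmem
    obtain ⟨-, j, hj⟩ := (hAM i (muF i) w).1 hC
    have hne : (Finset.univ.filter (fun j : Fin (J i) =>
        ∀ x ∈ muF i, (Pf ⟨i, j⟩).le (some x) (some w))).Nonempty :=
      ⟨j, by simpa using hj⟩
    refine ⟨(Finset.univ.filter (fun j : Fin (J i) =>
        ∀ x ∈ muF i, (Pf ⟨i, j⟩).le (some x) (some w))).min' hne, ?_, ?_⟩
    · rw [tinvW_eq Pf muW muF w i hmu, dif_pos hne]
    · have := Finset.min'_mem _ hne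
      simpa using this
  -- injectivity of TinvW on matched workers
  have hinj : ∀ w1 w2 (f : Σ i : ι, Fin (J i)),
      TinvW Pf muW muF w1 = some f → TinvW Pf muW muF w2 = some f → w1 = w2 := by
    intro w1 w2 f h1 h2
    obtain ⟨hmu1, hmax1⟩ := tinvW_spec Pf muW muF w1 f h1
    obtain ⟨hmu2, hmax2⟩ := tinvW_spec Pf muW muF w2 f h2
    have hm1 : w1 ∈ muF f.1 := (hmatch f.1 w1).2 hmu1
    have hm2 : w2 ∈ muF f.1 := (hmatch f.1 w2).2 hmu2
    have := (Pf f).le_antisymm _ _ (hmax1 w2 hm2) (hmax2 w1 hm1)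
    exact Option.some_injective _ this.symm
  refine ⟨hpart1, fun f w => ?_⟩
  constructor
  · intro h
    unfold TinvF at h
    split at h
    · rename_i hex
      obtain ⟨rfl⟩ : hex.choose = w := Option.some_injective _ h
      exact hex.choose_spec
    · simp at h
  · intro h
    have hex : ∃ w : W, TinvW Pf muW muF w = some f := ⟨w, h⟩
    unfold TinvF
    rw [dif_pos hex]
    exact congrArg some (hinj _ _ f hex.choose_spec h)

end
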